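/- arXiv:2410.15139 — 2 statements merged into one kernel-verified Lean document; each statement's English description precedes it below -/
import Mathlib

section
/- Let w : ℝ^n → ℝ^n be a contraction with respect to the metric d with contraction factor λ ∈ [0, 1) and fixed point x_f ∈ ℝ^n, and let w̃ : D^n(δ) → D^n(δ) be its δ-roundoff. Set r_0 = θ(1 − λ)^{−1} and Λ(x_f, r_0) = {ỹ ∈ D^n(δ) : d(ỹ, x_f) ≤ r_0}. Then Λ(x_f, r_0) is an absorbing set for w̃ in D^n(δ), and moreover w̃(Λ(x_f, r_0)) ⊂ Λ(x_f, r_0). -/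
open Set

noncomputable section

/-- The δ-discretization of ℝⁿ: the set of centers of the cubes of the δ-grid. -/
def Dgrid (n : ℕ) (δ : ℝ) : Set (Fin n → ℝ) :=
  {x | ∃ m : Fin n → ℤ, x = fun j => δ * (m j : ℝ)}

/-- The δ-roundoff of a point `x ∈ ℝⁿ`. -/
def roundPt (n : ℕ) (δ : ℝ) (x : Fin n → ℝ) : Fin n → ℝ :=
  fun j => δ * (⌊x j / δ + 1 / 2⌋ : ℤ)

/-- The δ-roundoff of a mapping `w : ℝⁿ → ℝⁿ`. -/
def roundMap (n : ℕ) (δ : ℝ) (w : (Fin n → ℝ) → (Fin n → ℝ)) :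
    (Fin n → ℝ) → (Fin n → ℝ) :=
  fun x => roundPt n δ (w x)

/-- `Λ` is an absorbing set for `w` in `C`. -/
def IsAbsorbing {X : Type*} (w : X → X) (C Λ : Set X) : Prop :=
  Λ ⊆ C ∧ ∀ x ∈ C, ∃ N : ℕ, ∀ i ≥ N, w^[i] x ∈ Λ

/-- The diameter of a δ-cube with respect to the norm `nrm`; `θ` is half this value. -/
def cubeDiam (n : ℕ) (δ : ℝ) (nrm : (Fin n → ℝ) → ℝ) : ℝ :=
  sSup {r | ∃ x y : Fin n → ℝ,
    (∀ j, -(δ / 2) ≤ x j ∧ x j < δ / 2) ∧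
    (∀ j, -(δ / 2) ≤ y j ∧ y j < δ / 2) ∧ r = nrm (x - y)}

/-!
Rounding moves a point by at most `θ`: the roundoff error lies in the half-open cube centred
at `0`, and a vector `e` in it satisfies `2 d(e, 0) ≤ diam C_δ`. Hence
`d(w̃ z, x_f) ≤ θ + λ d(z, x_f)`, and since `r₀` is the fixed point of `t ↦ θ + λ t`,
`d(w̃^i x, x_f) - r₀ ≤ λ^i (d(x, x_f) - r₀)`. In particular `Λ(x_f, r₀)` is invariant, and along
every orbit the distances to `x_f` are eventually below `r₀ + ε` for each `ε > 0`. As `d` is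
equivalent to the sup norm, only finitely many grid points lie within `r₀ + 1` of `x_f`, so the
distances above `r₀` that grid points can realise are bounded away from `r₀`; hence every orbit
ends up in `Λ(x_f, r₀)`.
-/

open Filter Topology

def Renormed (E : Type*) : Type _ := E

theorem Seminorm.exists_norm_le_mul_and_le_mul_norm {E : Type*} [NormedAddCommGroup E]
    [NormedSpace ℝ E] [FiniteDimensional ℝ E] (p : Seminorm ℝ E) (hp : ∀ x, p x = 0 → x = 0) :
    ∃ c C : ℝ, 0 ≤ c ∧ 0 ≤ C ∧ ∀ x, ‖x‖ ≤ c * p x ∧ p x ≤ C * ‖x‖ := by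
  let : AddCommGroup (Renormed E) := inferInstanceAs (AddCommGroup E)
  let : Module ℝ (Renormed E) := inferInstanceAs (Module ℝ E)
  let : NormedAddCommGroup (Renormed E) := AddGroupNorm.toNormedAddCommGroup
    { p.toAddGroupSeminorm with eq_zero_of_map_eq_zero' := hp }
  let : NormedSpace ℝ (Renormed E) := ⟨fun a x => (map_smul_eq_mul p a x).le⟩
  let : FiniteDimensional ℝ (Renormed E) := inferInstanceAs (FiniteDimensional ℝ E)
  let toRenormed : E ≃ₗ[ℝ] Renormed E := LinearEquiv.refl ℝ E
  let e := toRenormed.toContinuousLinearEquiv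
  exact ⟨‖(e.symm : Renormed E →L[ℝ] E)‖, ‖(e : E →L[ℝ] Renormed E)‖, norm_nonneg _,
    norm_nonneg _, fun x => ⟨(e.symm : Renormed E →L[ℝ] E).le_opNorm (e x),
    (e : E →L[ℝ] Renormed E).le_opNorm x⟩⟩

section Grid

variable {n : ℕ} {δ : ℝ}

def centeredCube (n : ℕ) (δ : ℝ) : Set (Fin n → ℝ) :=
  {x | ∀ j, -(δ / 2) ≤ x j ∧ x j < δ / 2}

theorem roundPt_mem_Dgrid (n : ℕ) (δ : ℝ) (x : Fin n → ℝ) : roundPt n δ x ∈ Dgrid n δ :=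
  ⟨fun j => ⌊x j / δ + 1 / 2⌋, rfl⟩

theorem sub_roundPt_mem_centeredCube (hδ : 0 < δ) (x : Fin n → ℝ) :
    x - roundPt n δ x ∈ centeredCube n δ := by
  intro j
  have hfract : (x - roundPt n δ x) j = δ * (Int.fract (x j / δ + 1 / 2) - 1 / 2) := by
    simp only [Pi.sub_apply, roundPt, Int.fract]
    field_simp
    ring
  rw [hfract]
  constructor <;>
    nlinarith [Int.fract_nonneg (x j / δ + 1 / 2), Int.fract_lt_one (x j / δ + 1 / 2)]

theorem smul_mem_centeredCube (hδ : 0 < δ) {x : Fin n → ℝ} (hx : x ∈ centeredCube n δ) {t : ℝ}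
    (ht : |t| < 1) : t • x ∈ centeredCube n δ := by
  intro j
  have hxj : |x j| ≤ δ / 2 := abs_le.2 ⟨(hx j).1, (hx j).2.le⟩
  have : |t * x j| < δ / 2 :=
    calc |t * x j| = |t| * |x j| := abs_mul t (x j)
      _ ≤ |t| * (δ / 2) := mul_le_mul_of_nonneg_left hxj (abs_nonneg t)
      _ < 1 * (δ / 2) := mul_lt_mul_of_pos_right ht (half_pos hδ)
      _ = δ / 2 := one_mul _
  exact ⟨(abs_lt.1 this).1.le, (abs_lt.1 this).2⟩

theorem Dgrid_inter_finite_of_isCompact (hδ : δ ≠ 0) {K : Set (Fin n → ℝ)} (hK : IsCompact K) :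
    (Dgrid n δ ∩ K).Finite := by
  let φ : (Fin n → ℤ) → (Fin n → ℝ) := fun m j => δ * (m j : ℝ)
  have hφ : Topology.IsClosedEmbedding φ :=
    (Homeomorph.smulOfNeZero δ hδ).isClosedEmbedding.comp
      (Topology.IsClosedEmbedding.piMap fun _ => Int.isClosedEmbedding_coe_real)
  refine ((hφ.isCompact_preimage hK).finite_of_discrete.image φ).subset ?_
  rintro _ ⟨⟨m, rfl⟩, hmK⟩
  exact ⟨m, hmK, rfl⟩

end Grid

section Seminorm

variable {n : ℕ} {δ : ℝ} (p : Seminorm ℝ (Fin n → ℝ))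

theorem le_cubeDiam {C : ℝ} (hC₀ : 0 ≤ C) (hC : ∀ x, p x ≤ C * ‖x‖) {x y : Fin n → ℝ}
    (hx : x ∈ centeredCube n δ) (hy : y ∈ centeredCube n δ) : p (x - y) ≤ cubeDiam n δ p := by
  refine le_csSup ⟨C * |δ|, ?_⟩ ⟨x, y, hx, hy, rfl⟩
  rintro _ ⟨x', y', hx', hy', rfl⟩
  have hδ : ‖x' - y'‖ ≤ |δ| := (pi_norm_le_iff_of_nonneg (abs_nonneg δ)).2 fun j => by
    rw [Pi.sub_apply, Real.norm_eq_abs, abs_le]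
    constructor <;> linarith [(hx' j).1, (hx' j).2, (hy' j).1, (hy' j).2, le_abs_self δ]
  exact (hC _).trans (mul_le_mul_of_nonneg_left hδ hC₀)

theorem two_mul_le_cubeDiam (hδ : 0 < δ) {C : ℝ} (hC₀ : 0 ≤ C) (hC : ∀ x, p x ≤ C * ‖x‖)
    {x : Fin n → ℝ} (hx : x ∈ centeredCube n δ) : 2 * p x ≤ cubeDiam n δ p := by
  -- `-x` may leave the half-open cube, but `±t • x` stay in it for `t < 1`.
  have hscaled : ∀ t ∈ Ioo (0 : ℝ) 1, t * (2 * p x) ≤ cubeDiam n δ p := fun t ⟨ht₀, ht₁⟩ => by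
    have ht : |t| < 1 := abs_lt.2 ⟨by linarith, ht₁⟩
    have hdiam := le_cubeDiam p hC₀ hC (smul_mem_centeredCube hδ hx ht)
      (smul_mem_centeredCube hδ hx ((abs_neg t).trans_lt ht))
    rwa [show t • x - (-t) • x = (2 * t) • x by module, map_smul_eq_mul, Real.norm_eq_abs,
      abs_of_pos (by linarith : 0 < 2 * t), mul_assoc, mul_left_comm] at hdiam
  have hlim : Tendsto (fun t : ℝ => t * (2 * p x)) (𝓝[<] 1) (𝓝 (1 * (2 * p x))) :=
    (tendsto_id.mul_const _).mono_left nhdsWithin_le_nhds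
  rw [one_mul] at hlim
  exact le_of_tendsto hlim (eventually_of_mem (Ioo_mem_nhdsLT one_pos) hscaled)

theorem seminorm_roundPt_sub_le (hδ : 0 < δ) {C : ℝ} (hC₀ : 0 ≤ C) (hC : ∀ x, p x ≤ C * ‖x‖)
    (x : Fin n → ℝ) : p (roundPt n δ x - x) ≤ cubeDiam n δ p / 2 := by
  have := two_mul_le_cubeDiam p hδ hC₀ hC (sub_roundPt_mem_centeredCube hδ x)
  rw [map_sub_rev] at this
  linarith

theorem finite_Dgrid_sublevel (hδ : δ ≠ 0) {c : ℝ} (hc₀ : 0 ≤ c) (hc : ∀ x, ‖x‖ ≤ c * p x)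
    (x₀ : Fin n → ℝ) (R : ℝ) : {x ∈ Dgrid n δ | p (x - x₀) ≤ R}.Finite :=
  (Dgrid_inter_finite_of_isCompact hδ (isCompact_closedBall x₀ (c * R))).subset
    fun _ hx => ⟨hx.1, mem_closedBall_iff_norm.2 <|
      (hc _).trans (mul_le_mul_of_nonneg_left hx.2 hc₀)⟩

theorem seminorm_roundMap_sub_le {w : (Fin n → ℝ) → Fin n → ℝ} {lam θ : ℝ}
    (hw : ∀ x y, p (w x - w y) ≤ lam * p (x - y)) {x₀ : Fin n → ℝ} (hx₀ : w x₀ = x₀)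
    (hround : ∀ x, p (roundPt n δ x - x) ≤ θ) (x : Fin n → ℝ) :
    p (roundMap n δ w x - x₀) ≤ θ + lam * p (x - x₀) :=
  calc p (roundMap n δ w x - x₀) = p ((roundPt n δ (w x) - w x) + (w x - w x₀)) := by
        rw [hx₀, sub_add_sub_cancel]; rfl
    _ ≤ θ + lam * p (x - x₀) := (map_add_le_add p _ _).trans (add_le_add (hround _) (hw x x₀))

end Seminorm

section Orbits

variable {X : Type*} {f : X → X} {d : X → ℝ} {lam r : ℝ}

theorem iterate_sub_le_pow_mul (hlam : 0 ≤ lam) (hf : ∀ x, d (f x) - r ≤ lam * (d x - r))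
    (x : X) (i : ℕ) : d (f^[i] x) - r ≤ lam ^ i * (d x - r) := by
  induction i with
  | zero => simp
  | succ i ih =>
    rw [Function.iterate_succ_apply', pow_succ', mul_assoc]
    exact (hf _).trans (mul_le_mul_of_nonneg_left ih hlam)

theorem eventually_iterate_le_add (hlam : lam ∈ Ico (0 : ℝ) 1)
    (hf : ∀ x, d (f x) - r ≤ lam * (d x - r)) (x : X) {ε : ℝ} (hε : 0 < ε) :
    ∀ᶠ i in atTop, d (f^[i] x) ≤ r + ε := by
  have hpow : Tendsto (fun i => lam ^ i * (d x - r)) atTop (𝓝 (0 * (d x - r))) :=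
    (tendsto_pow_atTop_nhds_zero_of_lt_one hlam.1 hlam.2).mul_const _
  rw [zero_mul] at hpow
  filter_upwards [hpow.eventually_lt_const hε] with i hi
  linarith [iterate_sub_le_pow_mul hlam.1 hf x i]

end Orbits

theorem eventually_le_of_finite_sublevel {ι α : Type*} {l : Filter ι} {u : ι → α} {S : Set α}
    {d : α → ℝ} {r R : ℝ} (hR : r < R) (hS : {a ∈ S | d a ≤ R}.Finite)
    (huS : ∀ᶠ i in l, u i ∈ S) (hu : ∀ ε > 0, ∀ᶠ i in l, d (u i) ≤ r + ε) :
    ∀ᶠ i in l, d (u i) ≤ r := by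
  set T := {a ∈ S | d a ≤ R ∧ r < d a}
  have hT : T.Finite := hS.subset fun a ha => ⟨ha.1, ha.2.1⟩
  have hav : ∀ᶠ i in l, ∀ a ∈ T, u i ≠ a := hT.eventually_all.2 fun a ha =>
    (hu _ (half_pos (sub_pos.2 ha.2.2))).mono fun i hi hia => by
      rw [hia] at hi
      linarith [ha.2.2]
  filter_upwards [huS, hu _ (sub_pos.2 hR), hav] with i hiS hiR hiT
  by_contra hir
  exact hiT _ ⟨hiS, by linarith, not_le.1 hir⟩ rfl

theorem stmt_4_general (n : ℕ) (δ : ℝ) (hδ : 0 < δ)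
    (nrm : (Fin n → ℝ) → ℝ)
    (hnrm_eq : ∀ x, nrm x = 0 ↔ x = 0)
    (hnrm_smul : ∀ (a : ℝ) (x : Fin n → ℝ), nrm (a • x) = |a| * nrm x)
    (hnrm_add : ∀ x y : Fin n → ℝ, nrm (x + y) ≤ nrm x + nrm y)
    (w : (Fin n → ℝ) → (Fin n → ℝ))
    (lam : ℝ) (hlam : lam ∈ Set.Ico (0 : ℝ) 1)
    (hcontr : ∀ x y : Fin n → ℝ, nrm (w x - w y) ≤ lam * nrm (x - y))
    (xf : Fin n → ℝ) (hxf : w xf = xf)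
    (θ : ℝ) (hθ : θ = cubeDiam n δ nrm / 2)
    (Λ : Set (Fin n → ℝ))
    (hΛ : Λ = {y ∈ Dgrid n δ | nrm (y - xf) ≤ θ * (1 - lam)⁻¹}) :
    IsAbsorbing (roundMap n δ w) (Dgrid n δ) Λ ∧
      ∀ y ∈ Λ, roundMap n δ w y ∈ Λ := by
  obtain ⟨p, rfl⟩ : ∃ p : Seminorm ℝ (Fin n → ℝ), ⇑p = nrm :=
    ⟨.of nrm hnrm_add fun a x => by rw [hnrm_smul, Real.norm_eq_abs], rfl⟩
  obtain ⟨c, C, hc₀, hC₀, hbounds⟩ :=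
    p.exists_norm_le_mul_and_le_mul_norm fun x => (hnrm_eq x).1
  set r := θ * (1 - lam)⁻¹ with hr_def
  have hr : θ + lam * r = r := by
    have : 1 - lam ≠ 0 := by linarith [hlam.2]
    rw [hr_def]
    field_simp
    ring
  have hdecay : ∀ x, p (roundMap n δ w x - xf) - r ≤ lam * (p (x - xf) - r) := fun x => by
    have hstep := seminorm_roundMap_sub_le p hcontr hxf
      (hθ ▸ seminorm_roundPt_sub_le p hδ hC₀ (fun y => (hbounds y).2)) x
    linarith
  have hgrid : MapsTo (roundMap n δ w) (Dgrid n δ) (Dgrid n δ) :=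
    fun x _ => roundPt_mem_Dgrid n δ (w x)
  subst hΛ
  refine ⟨⟨fun y hy => hy.1, fun x hx => eventually_atTop.1 ?_⟩, fun y hy => ⟨hgrid hy.1, ?_⟩⟩
  · have horbit : ∀ᶠ i in atTop, (roundMap n δ w)^[i] x ∈ Dgrid n δ :=
      .of_forall (hgrid.iterate · hx)
    have hnear : ∀ ε > 0, ∀ᶠ i in atTop, p ((roundMap n δ w)^[i] x - xf) ≤ r + ε :=
      fun ε hε => eventually_iterate_le_add (d := fun y => p (y - xf)) hlam hdecay x hε
    exact horbit.and <| eventually_le_of_finite_sublevel (d := fun y => p (y - xf))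
      (lt_add_one r) (finite_Dgrid_sublevel p hδ.ne' hc₀ (fun y => (hbounds y).1) xf _)
      horbit hnear
  · linarith [hdecay y, mul_nonpos_of_nonneg_of_nonpos hlam.1 (sub_nonpos.2 hy.2)]

/-- for a contraction `w` with factor `λ ∈ [0,1)` and fixed point `x_f`,
the set `Λ(x_f, r₀) = {ỹ ∈ D^n(δ) : d(ỹ, x_f) ≤ r₀}` with `r₀ = θ(1-λ)⁻¹` is an
absorbing set for the δ-roundoff `w̃` in `D^n(δ)`, and `w̃` maps it into itself. -/
theorem stmt_4 (n : ℕ) (hn : 1 ≤ n) (δ : ℝ) (hδ : 0 < δ)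
    (nrm : (Fin n → ℝ) → ℝ)
    (hnrm_eq : ∀ x, nrm x = 0 ↔ x = 0)
    (hnrm_smul : ∀ (a : ℝ) (x : Fin n → ℝ), nrm (a • x) = |a| * nrm x)
    (hnrm_add : ∀ x y : Fin n → ℝ, nrm (x + y) ≤ nrm x + nrm y)
    (w : (Fin n → ℝ) → (Fin n → ℝ))
    (lam : ℝ) (hlam : lam ∈ Set.Ico (0 : ℝ) 1)
    (hcontr : ∀ x y : Fin n → ℝ, nrm (w x - w y) ≤ lam * nrm (x - y))
    (xf : Fin n → ℝ) (hxf : w xf = xf)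
    (θ : ℝ) (hθ : θ = cubeDiam n δ nrm / 2)
    (Λ : Set (Fin n → ℝ))
    (hΛ : Λ = {y ∈ Dgrid n δ | nrm (y - xf) ≤ θ * (1 - lam)⁻¹}) :
    IsAbsorbing (roundMap n δ w) (Dgrid n δ) Λ ∧
      ∀ y ∈ Λ, roundMap n δ w y ∈ Λ :=
  stmt_4_general n δ hδ nrm hnrm_eq hnrm_smul hnrm_add w lam hlam hcontr xf hxf θ hθ Λ hΛ
end
end

section
/- Let w_1, …, w_N : ℝ^n → ℝ^n be a hyperbolic IFS on (ℝ^n, d) with contraction factors λ_1, …, λ_N ∈ [0, 1), λ_max = max_i λ_i, and attractor A_∞, and let w̃_1, …, w̃_N be the δ-roundoffs of the w_i. Let A ⊂ D^n(δ) be a nonempty set such that w̃_i(A) ⊂ A for every i, and such that every point x̃ ∈ A is recurrent in the sense that there exist k ≥ 1 and indices i_1, …, i_k ∈ {1, …, N} with w̃_{i_k} ∘ ⋯ ∘ w̃_{i_1}(x̃) = x̃. Then the Hausdorff distance between A and A_∞ satisfies h(A, A_∞) ≤ θ(1 − λ_max)^{−1}. -/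
open Set

noncomputable section

/-!
Roundoff orbits shadow true orbits: each step contracts the error by `λ_max` and adds at most
`θ`, so after `k` steps the error is at most `λ_max ^ k` times the initial one plus
`θ (1 - λ_max)⁻¹`, the fixed point of `e ↦ λ_max e + θ`. Every point of `A_∞` is reached from
`A_∞` by compositions of every length `k`; running the same roundoffs from a point of `A` stays
in `A` and ends that close. A recurrent point of `A` is fixed by arbitrarily long compositions of
roundoffs, and the true orbit of any point of `A_∞` along such a composition stays in `A_∞` and
ends that close to it.
-/

open Filter Topology

section Orbits

variable {α ι : Type*}

lemma foldl_mem_of_mapsTo {f : ι → α → α} {S : Set α} (hf : ∀ i, MapsTo (f i) S S)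
    (L : List ι) {x : α} (hx : x ∈ S) : L.foldl (fun p i => f i p) x ∈ S := by
  induction L generalizing x with
  | nil => exact hx
  | cons i L ih => exact ih (hf i hx)

lemma mapsTo_of_eq_iUnion_image {f : ι → α → α} {S : Set α} (hS : S = ⋃ i, f i '' S) (i : ι) :
    MapsTo (f i) S S := fun a ha => by
  rw [hS]; exact mem_iUnion_of_mem i (mem_image_of_mem _ ha)

lemma exists_foldl_eq_of_eq_iUnion_image {f : ι → α → α} {S : Set α} (hS : S = ⋃ i, f i '' S)
    (k : ℕ) {a : α} (ha : a ∈ S) :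
    ∃ L : List ι, L.length = k ∧ ∃ b ∈ S, L.foldl (fun p i => f i p) b = a := by
  induction k generalizing a with
  | zero => exact ⟨[], rfl, a, ha, rfl⟩
  | succ k ih =>
    rw [hS] at ha
    obtain ⟨i, a', ha', rfl⟩ : ∃ i, ∃ a' ∈ S, f i a' = a := by simpa using ha
    obtain ⟨L, rfl, b, hb, rfl⟩ := ih ha'
    exact ⟨L ++ [i], by simp, b, hb, by simp⟩

lemma exists_length_ge_foldl_eq_self {f : ι → α → α} {L : List ι} (hL : L ≠ []) {x : α}
    (hx : L.foldl (fun p i => f i p) x = x) (m : ℕ) :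
    ∃ L' : List ι, m ≤ L'.length ∧ L'.foldl (fun p i => f i p) x = x := by
  refine ⟨(List.replicate m L).flatten, ?_, ?_⟩
  · have : 1 ≤ L.length := List.length_pos_iff.mpr hL
    simp only [List.length_flatten, List.map_replicate, List.sum_replicate, smul_eq_mul]
    nlinarith
  · induction m with
    | zero => rfl
    | succ m ih => rw [List.replicate_succ, List.flatten_cons, List.foldl_append, hx, ih]

end Orbits

section Seminorm

variable {E : Type*} [AddCommGroup E] [Module ℝ E] (p : Seminorm ℝ E)

lemma seminorm_foldl_sub_foldl_le {ι : Type*} [Nonempty ι] {w wr : ι → E → E} {lam θ : ℝ}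
    (hlam0 : 0 ≤ lam) (hlam1 : lam < 1)
    (hw : ∀ i x y, p (w i x - w i y) ≤ lam * p (x - y)) (hwr : ∀ i x, p (w i x - wr i x) ≤ θ)
    (L : List ι) (y z : E) :
    p (L.foldl (fun q i => w i q) y - L.foldl (fun q i => wr i q) z)
      ≤ lam ^ L.length * p (y - z) + θ * (1 - lam)⁻¹ := by
  have hθ : 0 ≤ θ := (apply_nonneg p _).trans (hwr (Classical.arbitrary ι) 0)
  have hfix : lam * (θ * (1 - lam)⁻¹) + θ = θ * (1 - lam)⁻¹ := by
    field_simp [(sub_pos.2 hlam1).ne']; ring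
  induction L using List.reverseRecOn with
  | nil => simpa using mul_nonneg hθ (inv_nonneg.2 (sub_nonneg.2 hlam1.le))
  | append_singleton L i ih =>
    set u := L.foldl (fun q i => w i q) y
    set v := L.foldl (fun q i => wr i q) z
    simp only [List.foldl_append, List.foldl_cons, List.foldl_nil, List.length_append,
      List.length_singleton, pow_succ]
    calc p (w i u - wr i v) ≤ p (w i u - w i v) + p (w i v - wr i v) :=
          le_map_sub_add_map_sub p _ _ _
      _ ≤ lam * p (u - v) + θ := add_le_add (hw i u v) (hwr i v)
      _ ≤ lam * (lam ^ L.length * p (y - z) + θ * (1 - lam)⁻¹) + θ := by gcongr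
      _ = lam ^ L.length * lam * p (y - z) + θ * (1 - lam)⁻¹ := by linear_combination hfix

lemma exists_seminorm_sub_foldl_lt_of_mem_attractor {ι : Type*} [Nonempty ι] {w wr : ι → E → E}
    {lam θ : ℝ} (hlam0 : 0 ≤ lam) (hlam1 : lam < 1)
    (hw : ∀ i x y, p (w i x - w i y) ≤ lam * p (x - y)) (hwr : ∀ i x, p (w i x - wr i x) ≤ θ)
    {K A : Set E} (hK : K = ⋃ i, w i '' K) (hA : ∀ i, MapsTo (wr i) A A) {x₀ : E} (hx₀ : x₀ ∈ A)
    (hbdd : BddAbove ((fun b => p (b - x₀)) '' K)) {ε : ℝ} (hε : 0 < ε) {a : E} (ha : a ∈ K) :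
    ∃ x ∈ A, p (a - x) < θ * (1 - lam)⁻¹ + ε := by
  obtain ⟨M, hM⟩ := hbdd
  obtain ⟨k, hk⟩ := ((tendsto_pow_atTop_nhds_zero_of_lt_one hlam0 hlam1).mul_const M
    |>.eventually_lt_const (by simpa using hε)).exists
  obtain ⟨L, rfl, b, hb, rfl⟩ := exists_foldl_eq_of_eq_iUnion_image hK k ha
  refine ⟨_, foldl_mem_of_mapsTo hA L hx₀, ?_⟩
  calc _ ≤ lam ^ L.length * p (b - x₀) + θ * (1 - lam)⁻¹ :=
        seminorm_foldl_sub_foldl_le p hlam0 hlam1 hw hwr L b x₀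
    _ ≤ lam ^ L.length * M + θ * (1 - lam)⁻¹ := by gcongr; exact hM (mem_image_of_mem _ hb)
    _ < θ * (1 - lam)⁻¹ + ε := by linarith

lemma exists_seminorm_sub_lt_of_foldl_eq_self {ι : Type*} [Nonempty ι] {w wr : ι → E → E}
    {lam θ : ℝ} (hlam0 : 0 ≤ lam) (hlam1 : lam < 1)
    (hw : ∀ i x y, p (w i x - w i y) ≤ lam * p (x - y)) (hwr : ∀ i x, p (w i x - wr i x) ≤ θ)
    {K : Set E} (hK : K = ⋃ i, w i '' K) (hKne : K.Nonempty) {x : E}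
    (hx : ∃ L : List ι, L ≠ [] ∧ L.foldl (fun q i => wr i q) x = x) {ε : ℝ} (hε : 0 < ε) :
    ∃ a ∈ K, p (x - a) < θ * (1 - lam)⁻¹ + ε := by
  obtain ⟨L, hL, hLx⟩ := hx
  obtain ⟨a₀, ha₀⟩ := hKne
  obtain ⟨m, hm⟩ := eventually_atTop.1 <|
    (tendsto_pow_atTop_nhds_zero_of_lt_one hlam0 hlam1).mul_const (p (a₀ - x))
    |>.eventually_lt_const (by simpa using hε)
  obtain ⟨L', hmL', hL'x⟩ := exists_length_ge_foldl_eq_self hL hLx m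
  refine ⟨_, foldl_mem_of_mapsTo (mapsTo_of_eq_iUnion_image hK) L' ha₀, ?_⟩
  calc p (x - _) = p (L'.foldl (fun q i => w i q) a₀ - L'.foldl (fun q i => wr i q) x) := by
        rw [map_sub_rev, hL'x]
    _ ≤ lam ^ L'.length * p (a₀ - x) + θ * (1 - lam)⁻¹ :=
        seminorm_foldl_sub_foldl_le p hlam0 hlam1 hw hwr L' a₀ x
    _ < θ * (1 - lam)⁻¹ + ε := by linarith [hm _ hmL']

end Seminorm

theorem Seminorm.continuous_of_finiteDimensional {E : Type*} [NormedAddCommGroup E]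
    [NormedSpace ℝ E] [FiniteDimensional ℝ E] (p : Seminorm ℝ E) : Continuous p :=
  p.convexOn.locallyLipschitz.continuous

section Roundoff

variable {n : ℕ} {δ : ℝ}

def halfOpenCube (n : ℕ) (δ : ℝ) : Set (Fin n → ℝ) := {x | ∀ j, x j ∈ Ico (-(δ / 2)) (δ / 2)}

lemma sub_roundPt_mem_halfOpenCube (hδ : 0 < δ) (x : Fin n → ℝ) :
    x - roundPt n δ x ∈ halfOpenCube n δ := by
  intro j
  have h₁ := Int.floor_le (x j / δ + 1 / 2)
  have h₂ := Int.lt_floor_add_one (x j / δ + 1 / 2)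
  have hx : x j = δ * (x j / δ) := by field_simp
  simp only [Pi.sub_apply, roundPt, mem_Ico]
  constructor <;> nlinarith

lemma bddAbove_cubeDiam_set (p : Seminorm ℝ (Fin n → ℝ)) :
    BddAbove {r | ∃ x y : Fin n → ℝ,
      (∀ j, -(δ / 2) ≤ x j ∧ x j < δ / 2) ∧
      (∀ j, -(δ / 2) ≤ y j ∧ y j < δ / 2) ∧ r = p (x - y)} := by
  refine ((isCompact_closedBall (0 : Fin n → ℝ) |δ|).image
    p.continuous_of_finiteDimensional).bddAbove.mono ?_
  rintro _ ⟨x, y, hx, hy, rfl⟩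
  refine mem_image_of_mem _ <| mem_closedBall_zero_iff.2 <|
    (pi_norm_le_iff_of_nonneg (abs_nonneg δ)).2 fun j => ?_
  rw [Pi.sub_apply, Real.norm_eq_abs, abs_le]
  constructor <;> cases abs_cases δ <;> linarith [hx j, hy j]

lemma seminorm_le_half_cubeDiam (p : Seminorm ℝ (Fin n → ℝ)) {u : Fin n → ℝ}
    (hu : u ∈ halfOpenCube n δ) : p u ≤ cubeDiam n δ p / 2 := by
  -- `u` and `-u` need not both lie in the half-open cube, but `t • u` and `-(t • u)` do if `t < 1`.
  have hscaled : ∀ t ∈ Ioo (0 : ℝ) 1, 2 * t * p u ≤ cubeDiam n δ p := by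
    rintro t ⟨ht0, ht1⟩
    have hshrink : ∀ j, |t * u j| < δ / 2 := fun j => by
      have hδ : 0 < δ := by linarith [(hu j).1, (hu j).2]
      have := abs_le.2 ⟨(hu j).1, (hu j).2.le⟩
      rw [abs_mul, abs_of_pos ht0]
      nlinarith
    refine le_csSup (bddAbove_cubeDiam_set p) ⟨t • u, -(t • u), fun j => ?_, fun j => ?_, ?_⟩
    · have := abs_lt.1 (hshrink j)
      exact ⟨this.1.le, this.2⟩
    · have := abs_lt.1 (hshrink j)
      simp only [Pi.neg_apply, Pi.smul_apply, smul_eq_mul]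
      constructor <;> linarith
    · rw [sub_neg_eq_add, ← two_smul ℝ, smul_smul, map_smul_eq_mul,
        Real.norm_of_nonneg (by positivity)]
  have hlim : Tendsto (fun t => 2 * t * p u) (𝓝[<] 1) (𝓝 (2 * 1 * p u)) :=
    ((continuous_const.mul continuous_id).mul continuous_const).tendsto 1
      |>.mono_left nhdsWithin_le_nhds
  have := le_of_tendsto hlim (eventually_of_mem (Ioo_mem_nhdsLT zero_lt_one) hscaled)
  linarith

lemma seminorm_sub_roundPt_le (p : Seminorm ℝ (Fin n → ℝ)) (hδ : 0 < δ) (x : Fin n → ℝ) :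
    p (x - roundPt n δ x) ≤ cubeDiam n δ p / 2 :=
  seminorm_le_half_cubeDiam p (sub_roundPt_mem_halfOpenCube hδ x)

end Roundoff

theorem stmt_18_general (n : ℕ) (δ : ℝ) (hδ : 0 < δ)
    (nrm : (Fin n → ℝ) → ℝ)
    (hnrm_smul : ∀ (a : ℝ) (x : Fin n → ℝ), nrm (a • x) = |a| * nrm x)
    (hnrm_add : ∀ x y : Fin n → ℝ, nrm (x + y) ≤ nrm x + nrm y)
    (N : ℕ)
    (w : Fin N → (Fin n → ℝ) → (Fin n → ℝ))
    (lam : Fin N → ℝ) (hlam : ∀ i, lam i ∈ Set.Ico (0 : ℝ) 1)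
    (hcontr : ∀ i, ∀ x y : Fin n → ℝ, nrm (w i x - w i y) ≤ lam i * nrm (x - y))
    (lmax : ℝ) (hlmax_ub : ∀ i, lam i ≤ lmax) (hlmax_mem : ∃ i, lam i = lmax)
    (θ : ℝ) (hθ : θ = cubeDiam n δ nrm / 2)
    (Ainf : Set (Fin n → ℝ)) (hAinf_ne : Ainf.Nonempty)
    (hAinf_cpt : IsCompact Ainf) (hAinf_inv : Ainf = ⋃ i, w i '' Ainf)
    (A : Set (Fin n → ℝ)) (hAne : A.Nonempty)
    (hAw : ∀ i, ∀ x ∈ A, roundMap n δ (w i) x ∈ A)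
    (hrec : ∀ x ∈ A, ∃ L : List (Fin N), L ≠ [] ∧
      L.foldl (fun p i => roundMap n δ (w i) p) x = x) :
    ∀ ε > 0,
      (∀ a ∈ Ainf, ∃ x ∈ A, nrm (a - x) < θ * (1 - lmax)⁻¹ + ε) ∧
      (∀ x ∈ A, ∃ a ∈ Ainf, nrm (x - a) < θ * (1 - lmax)⁻¹ + ε) := by
  let p : Seminorm ℝ (Fin n → ℝ) :=
    Seminorm.of nrm hnrm_add fun a x => by rw [Real.norm_eq_abs, hnrm_smul]
  obtain ⟨i₀, rfl⟩ := hlmax_mem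
  have : Nonempty (Fin N) := ⟨i₀⟩
  have hw : ∀ i x y, p (w i x - w i y) ≤ lam i₀ * p (x - y) := fun i x y =>
    (hcontr i x y).trans (mul_le_mul_of_nonneg_right (hlmax_ub i) (apply_nonneg p _))
  have hwr : ∀ i x, p (w i x - roundMap n δ (w i) x) ≤ θ := fun i x =>
    hθ ▸ seminorm_sub_roundPt_le p hδ (w i x)
  obtain ⟨x₀, hx₀⟩ := hAne
  have hbdd : BddAbove ((fun b => p (b - x₀)) '' Ainf) :=
    hAinf_cpt.bddAbove_image
      (p.continuous_of_finiteDimensional.comp (continuous_sub_right x₀)).continuousOn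
  intro ε hε
  exact ⟨fun a ha => exists_seminorm_sub_foldl_lt_of_mem_attractor p (hlam i₀).1 (hlam i₀).2 hw hwr
      hAinf_inv hAw hx₀ hbdd hε ha,
    fun x hx => exists_seminorm_sub_lt_of_foldl_eq_self p (hlam i₀).1 (hlam i₀).2 hw hwr
      hAinf_inv hAinf_ne (hrec x hx) hε⟩

/-- let `w₁, …, w_N` be a hyperbolic IFS with attractor `A_∞` (the
unique nonempty compact set with `A_∞ = ⋃ᵢ wᵢ(A_∞)`), and let `A ⊆ D^n(δ)` be a
nonempty set closed under the δ-roundoffs `w̃ᵢ` all of whose points are recurrent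
(each is a fixed point of some nonempty composition of the maps `w̃ᵢ`).  Then the
Hausdorff distance satisfies `h(A, A_∞) ≤ θ(1-λ_max)⁻¹`, expressed as: for every
`ε > 0`, `A_∞` lies in the `(θ(1-λ_max)⁻¹ + ε)`-neighbourhood of `A` and `A` lies
in the `(θ(1-λ_max)⁻¹ + ε)`-neighbourhood of `A_∞` for the metric `d(x,y) = nrm (x-y)`. -/
theorem stmt_18 (n : ℕ) (hn : 1 ≤ n) (δ : ℝ) (hδ : 0 < δ)
    (nrm : (Fin n → ℝ) → ℝ)
    (hnrm_eq : ∀ x, nrm x = 0 ↔ x = 0)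
    (hnrm_smul : ∀ (a : ℝ) (x : Fin n → ℝ), nrm (a • x) = |a| * nrm x)
    (hnrm_add : ∀ x y : Fin n → ℝ, nrm (x + y) ≤ nrm x + nrm y)
    (N : ℕ) (hN : 0 < N)
    (w : Fin N → (Fin n → ℝ) → (Fin n → ℝ))
    (lam : Fin N → ℝ) (hlam : ∀ i, lam i ∈ Set.Ico (0 : ℝ) 1)
    (hcontr : ∀ i, ∀ x y : Fin n → ℝ, nrm (w i x - w i y) ≤ lam i * nrm (x - y))
    (lmax : ℝ) (hlmax_ub : ∀ i, lam i ≤ lmax) (hlmax_mem : ∃ i, lam i = lmax)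
    (θ : ℝ) (hθ : θ = cubeDiam n δ nrm / 2)
    (Ainf : Set (Fin n → ℝ)) (hAinf_ne : Ainf.Nonempty)
    (hAinf_cpt : IsCompact Ainf) (hAinf_inv : Ainf = ⋃ i, w i '' Ainf)
    (A : Set (Fin n → ℝ)) (hA : A ⊆ Dgrid n δ) (hAne : A.Nonempty)
    (hAw : ∀ i, ∀ x ∈ A, roundMap n δ (w i) x ∈ A)
    (hrec : ∀ x ∈ A, ∃ L : List (Fin N), L ≠ [] ∧
      L.foldl (fun p i => roundMap n δ (w i) p) x = x) :
    ∀ ε > 0,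
      (∀ a ∈ Ainf, ∃ x ∈ A, nrm (a - x) < θ * (1 - lmax)⁻¹ + ε) ∧
      (∀ x ∈ A, ∃ a ∈ Ainf, nrm (x - a) < θ * (1 - lmax)⁻¹ + ε) :=
  stmt_18_general n δ hδ nrm hnrm_smul hnrm_add N w lam hlam hcontr lmax hlmax_ub hlmax_mem θ hθ
    Ainf hAinf_ne hAinf_cpt hAinf_inv A hAne hAw hrec
end
end
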